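/- For every integer k ≥ 1: 1 + ((F(6k+1)-1)/2)*F(6k) + ((F(6k-2)-1)/2)*F(6k+2) = (F(6k)-1)*(F(6k+2)-1)/2. -/
import Mathlib

lemma fib_mod2_step (n : ℕ) : Nat.fib (n + 3) % 2 = Nat.fib n % 2 := by
  have h1 : Nat.fib (n + 3) = Nat.fib (n + 1) + Nat.fib (n + 2) := Nat.fib_add_two (n := n + 1)
  have h2 := Nat.fib_add_two (n := n)
  omega

lemma fib_mod2 (j r : ℕ) : Nat.fib (3 * j + r) % 2 = Nat.fib r % 2 := by
  induction j with
  | zero => simp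
  | succ j ih =>
    have : 3 * (j + 1) + r = (3 * j + r) + 3 := by ring
    rw [this, fib_mod2_step, ih]

lemma cassini (n : ℕ) :
    (Nat.fib (n + 1) : ℤ) ^ 2 - Nat.fib (n + 1) * Nat.fib n - (Nat.fib n : ℤ) ^ 2 = (-1) ^ n := by
  induction n with
  | zero => simp
  | succ n ih =>
    rw [show n + 1 + 1 = n + 2 from rfl, Nat.fib_add_two]
    push_cast
    rw [pow_succ]
    linear_combination (-1 : ℤ) * ih

theorem stmt_19 (k : ℕ) (hk : 1 ≤ k) :
    1 + (Nat.fib (6 * k + 1) - 1) / 2 * Nat.fib (6 * k) +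
      (Nat.fib (6 * k - 2) - 1) / 2 * Nat.fib (6 * k + 2) =
    (Nat.fib (6 * k) - 1) * (Nat.fib (6 * k + 2) - 1) / 2 := by
  obtain ⟨m, hm⟩ : ∃ m, 6 * k - 2 = m := ⟨6 * k - 2, rfl⟩
  have h0 : 6 * k = m + 2 := by omega
  have h1 : 6 * k + 1 = m + 3 := by omega
  have h2 : 6 * k + 2 = m + 4 := by omega
  rw [hm, h0]
  rw [show m + 2 + 1 = m + 3 from rfl, show m + 2 + 2 = m + 4 from rfl]
  -- parity of fib m and fib (m+1)
  have hma : Nat.fib m % 2 = 1 := by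
    have : m = 3 * (2 * k - 1) + 1 := by omega
    rw [this, fib_mod2]
    rfl
  have hmb : Nat.fib (m + 1) % 2 = 1 := by
    have : m + 1 = 3 * (2 * k - 1) + 2 := by omega
    rw [this, fib_mod2]
    rfl
  obtain ⟨p, hp⟩ : ∃ p, Nat.fib m = 2 * p + 1 := ⟨Nat.fib m / 2, by omega⟩
  obtain ⟨q, hq⟩ : ∃ q, Nat.fib (m + 1) = 2 * q + 1 := ⟨Nat.fib (m + 1) / 2, by omega⟩
  have e2 : Nat.fib (m + 2) = 2 * p + 2 * q + 2 := by
    rw [Nat.fib_add_two, hp, hq]; ring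
  have e3 : Nat.fib (m + 3) = 2 * p + 4 * q + 3 := by
    rw [show m + 3 = (m + 1) + 2 from rfl, Nat.fib_add_two, hq, e2]; ring
  have e4 : Nat.fib (m + 4) = 4 * p + 6 * q + 5 := by
    rw [show m + 4 = (m + 2) + 2 from rfl, Nat.fib_add_two, e2, e3]; ring
  -- Cassini at n = m + 2 (even index)
  have hcz := cassini (m + 2)
  have heven : (-1 : ℤ) ^ (m + 2) = 1 := by
    have : Even (m + 2) := by
      refine Nat.even_iff.mpr ?_
      omega
    exact this.neg_one_pow
  rw [heven, show m + 2 + 1 = m + 3 from rfl, e2, e3] at hcz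
  push_cast at hcz
  have hpq : (2 * q ^ 2 + q : ℤ) = 2 * p ^ 2 + 2 * p * q + 3 * p + 1 := by linarith [hcz]
  rw [hp, e2, e3, e4]
  have d1 : (2 * p + 4 * q + 3 - 1) / 2 = p + 2 * q + 1 := by omega
  have d2 : (2 * p + 1 - 1) / 2 = p := by omega
  have d3 : (2 * p + 2 * q + 2 - 1) * (4 * p + 6 * q + 5 - 1) / 2
      = (2 * p + 2 * q + 1) * (2 * p + 3 * q + 2) := by
    rw [show 2 * p + 2 * q + 2 - 1 = 2 * p + 2 * q + 1 from by omega,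
      show 4 * p + 6 * q + 5 - 1 = 4 * p + 6 * q + 4 from by omega,
      show (2 * p + 2 * q + 1) * (4 * p + 6 * q + 4)
        = 2 * ((2 * p + 2 * q + 1) * (2 * p + 3 * q + 2)) from by ring]
    exact Nat.mul_div_cancel_left _ (by norm_num)
  rw [d1, d2, d3]
  zify
  linear_combination (-1 : ℤ) * hpq
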